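/- Let K ⊇ F be a differential extension with the same constants as F, and let 𝓘 be a set of locally iterated Picard–Vessiot subextensions of F inside K. Then the compositum of the fields in 𝓘 is a locally iterated Picard–Vessiot extension of F. -/

import Mathlib

/-- A derivation on a field, given as a bare function. -/
structure IsDeriv {K : Type*} [Field K] (d : K → K) : Prop where
  map_add : ∀ a b : K, d (a + b) = d a + d b
  leibniz : ∀ a b : K, d (a * b) = a * d b + d a * b

variable {K : Type*} [Field K]

/-- A subfield is a differential subfield if it is stable under the derivation. -/
def DStable (d : K → K) (E : Subfield K) : Prop := ∀ x ∈ E, d x ∈ E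

/-- `y` is a solution of the monic linear homogeneous ODE
`Y⁽ⁿ⁾ + a_{n-1} Y⁽ⁿ⁻¹⁾ + ⋯ + a_0 Y = 0`. -/
def IsSol (d : K → K) {n : ℕ} (a : Fin n → K) (y : K) : Prop :=
  d^[n] y + ∑ i : Fin n, a i * d^[(i : ℕ)] y = 0

/-- The family `v` is linearly independent over the constants. -/
def LinIndepConst (d : K → K) {n : ℕ} (v : Fin n → K) : Prop :=
  ∀ c : Fin n → K, (∀ i, d (c i) = 0) → ∑ i, c i * v i = 0 → ∀ i, c i = 0

/-- The ODE with coefficients `a` has a full set of solutions inside `T`. -/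
def FullSolutionsIn (d : K → K) {n : ℕ} (a : Fin n → K) (T : Set K) : Prop :=
  ∃ v : Fin n → K, (∀ i, v i ∈ T) ∧ (∀ i, IsSol d a (v i)) ∧ LinIndepConst d v

/-- The (differential) subfield generated by a set: the subfield generated by the
set together with all of its iterated derivatives. -/
def DiffGen (d : K → K) (A : Set K) : Subfield K :=
  Subfield.closure (⋃ k, d^[k] '' A)

/-- `M` is a Picard–Vessiot extension of `E` (for some monic linear operator `L`):
no new constants, and `M` is generated over `E` by a full set of solutions of `L`. -/
def IsPV (d : K → K) (E M : Subfield K) : Prop :=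
  E ≤ M ∧ (∀ x ∈ M, d x = 0 → x ∈ E) ∧
  ∃ (n : ℕ) (a v : Fin n → K), (∀ i, a i ∈ E) ∧ (∀ i, v i ∈ M) ∧
    (∀ i, IsSol d a (v i)) ∧ LinIndepConst d v ∧
    M ≤ DiffGen d (↑E ∪ Set.range v)

/-- `E` is an iterated Picard–Vessiot extension of `F`: there is a finite defining
tower of Picard–Vessiot steps from `F` to `E`. -/
def IsIPV (d : K → K) (F E : Subfield K) : Prop :=
  ∃ (n : ℕ) (T : Fin (n + 1) → Subfield K), T 0 = F ∧ T (Fin.last n) = E ∧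
    ∀ i : Fin n, IsPV d (T i.castSucc) (T i.succ)

/-- `E` is a locally iterated Picard–Vessiot extension of `F`: every finite subset
of `E` lies in an iterated Picard–Vessiot subextension. -/
def IsLIPV (d : K → K) (F E : Subfield K) : Prop :=
  F ≤ E ∧ ∀ X : Finset K, ↑X ⊆ (E : Set K) → ∃ M : Subfield K,
    M ≤ E ∧ IsIPV d F M ∧ ↑X ⊆ (M : Set K)

/-- `E₁` is a Picard–Vessiot closure of `E`: a no-new-constants extension in which every
linear homogeneous ODE over `E` has a full set of solutions, generated by such solutions. -/
def IsPVClosure (d : K → K) (E E₁ : Subfield K) : Prop :=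
  E ≤ E₁ ∧ (∀ x ∈ E₁, d x = 0 → x ∈ E) ∧
  (∀ (n : ℕ) (a : Fin n → K), (∀ i, a i ∈ E) → FullSolutionsIn d a E₁) ∧
  E₁ ≤ DiffGen d (↑E ∪ {y | y ∈ E₁ ∧ ∃ (n : ℕ) (a : Fin n → K), (∀ i, a i ∈ E) ∧ IsSol d a y})

/-- A tower of iterated Picard–Vessiot closures `F = F₀ ⊆ F₁ ⊆ F₂ ⊆ ⋯`. -/
def IsPVTower (d : K → K) (Fi : ℕ → Subfield K) : Prop :=
  ∀ i, IsPVClosure d (Fi i) (Fi (i + 1))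

/-- The field of constants is algebraically closed. -/
def ConstAlgClosed (d : K → K) : Prop :=
  ∀ p : Polynomial K, 0 < p.degree → (∀ n, d (p.coeff n) = 0) → ∃ x, d x = 0 ∧ p.eval x = 0

/-- `σ` is a differential automorphism over `F`. -/
def IsDiffAutOver (d : K → K) (F : Subfield K) (σ : K ≃+* K) : Prop :=
  (∀ x, σ (d x) = d (σ x)) ∧ ∀ x ∈ F, σ x = x

/-!
A Picard–Vessiot step `E ⊆ M` stays a Picard–Vessiot step after adjoining an intermediate
field `B ⊇ E` on both sides, because the same solutions generate `B ⊔ M` over `B` and, `K` having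
no new constants over `F`, no new constants can appear. Hence adjoining `B` to each field of a
Picard–Vessiot tower from `F` to `N` gives a tower from `B` to `B ⊔ N`; appending it to a tower from
`F` to `B` shows that the compositum of two iterated Picard–Vessiot extensions is again one. So the
iterated Picard–Vessiot subextensions of `F ⊔ sSup I` form a directed family; its union contains
every field of `I`, and any finite subset of it lies in a single member.
-/

section

variable {d : K → K}

lemma diffGen_mono (d : K → K) {A B : Set K} (h : A ⊆ B) : DiffGen d A ≤ DiffGen d B :=
  Subfield.closure_mono (Set.iUnion_mono fun _ => Set.image_mono h)

lemma subset_diffGen (d : K → K) (A : Set K) : A ⊆ DiffGen d A := fun x hx =>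
  Subfield.subset_closure (Set.mem_iUnion.2 ⟨0, x, hx, rfl⟩)

lemma IsPV.sup_left {F E M B : Subfield K} (hconst : ∀ x : K, d x = 0 → x ∈ F)
    (hFB : F ≤ B) (hEB : E ≤ B) (h : IsPV d E M) : IsPV d B (B ⊔ M) := by
  obtain ⟨-, -, n, a, v, ha, hv, hsol, hli, hgen⟩ := h
  refine ⟨le_sup_left, fun x _ hx => hFB (hconst x hx), n, a, v, fun i => hEB (ha i),
    fun i => le_sup_right (α := Subfield K) (hv i), hsol, hli, sup_le ?_ ?_⟩
  · exact fun x hx => subset_diffGen d _ (Or.inl hx)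
  · exact hgen.trans (diffGen_mono d (Set.union_subset_union_left _ hEB))

lemma isIPV_refl (d : K → K) (F : Subfield K) : IsIPV d F F :=
  ⟨0, fun _ => F, rfl, rfl, fun i => i.elim0⟩

lemma IsIPV.le {F E : Subfield K} (h : IsIPV d F E) : F ≤ E := by
  obtain ⟨n, T, rfl, rfl, hstep⟩ := h
  suffices ∀ i, T 0 ≤ T i from this _
  intro i
  induction i using Fin.induction with
  | zero => exact le_rfl
  | succ i ih => exact ih.trans (hstep i).1

lemma IsIPV.snoc {F M E : Subfield K} (h : IsIPV d F M) (hME : IsPV d M E) : IsIPV d F E := by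
  obtain ⟨n, T, hT0, rfl, hstep⟩ := h
  refine ⟨n + 1, Fin.snoc T E, ?_, Fin.snoc_last _ _, fun i => ?_⟩
  · exact (Fin.snoc_castSucc (α := fun _ => Subfield K) E T 0).trans hT0
  induction i using Fin.lastCases with
  | last => simpa using hME
  | cast i =>
    rw [Fin.succ_castSucc, Fin.snoc_castSucc, Fin.snoc_castSucc]
    exact hstep i

lemma IsIPV.trans {F M E : Subfield K} (hFM : IsIPV d F M) (hME : IsIPV d M E) :
    IsIPV d F E := by
  obtain ⟨m, T, hT0, rfl, hstep⟩ := hME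
  induction m with
  | zero => simpa [Fin.last, ← hT0] using hFM
  | succ m ih =>
    have hinit : IsIPV d F (T (Fin.last m).castSucc) :=
      ih (Fin.init T) hT0 fun i => by
        simpa only [Fin.init, Fin.succ_castSucc] using hstep i.castSucc
    simpa using hinit.snoc (hstep (Fin.last m))

lemma IsIPV.sup_left {F N B : Subfield K} (hconst : ∀ x : K, d x = 0 → x ∈ F)
    (hFB : F ≤ B) (h : IsIPV d F N) : IsIPV d B (B ⊔ N) := by
  obtain ⟨n, T, rfl, rfl, hstep⟩ := h
  refine ⟨n, fun i => B ⊔ T i, sup_eq_left.2 hFB, rfl, fun i => ?_⟩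
  have h' := (hstep i).sup_left hconst (hFB.trans le_sup_left) le_sup_right
  rwa [sup_assoc, sup_eq_right.2 (hstep i).1] at h'

lemma IsIPV.sup {F M N : Subfield K} (hconst : ∀ x : K, d x = 0 → x ∈ F)
    (hM : IsIPV d F M) (hN : IsIPV d F N) : IsIPV d F (M ⊔ N) :=
  hM.trans (hN.sup_left hconst hM.le)

def ipvSubextensions (d : K → K) (F E : Subfield K) : Set (Subfield K) :=
  {M | M ≤ E ∧ IsIPV d F M}

lemma mem_ipvSubextensions {F E M : Subfield K} :
    M ∈ ipvSubextensions d F E ↔ M ≤ E ∧ IsIPV d F M :=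
  Iff.rfl

lemma directedOn_ipvSubextensions {F : Subfield K} (hconst : ∀ x : K, d x = 0 → x ∈ F)
    (E : Subfield K) : DirectedOn (· ≤ ·) (ipvSubextensions d F E) :=
  fun M hM N hN =>
    ⟨M ⊔ N, mem_ipvSubextensions.2 ⟨sup_le hM.1 hN.1, hM.2.sup hconst hN.2⟩, le_sup_left, le_sup_right⟩

lemma IsLIPV.le_sSup_ipvSubextensions {F A E : Subfield K} (hA : IsLIPV d F A) (hAE : A ≤ E) :
    A ≤ sSup (ipvSubextensions d F E) := fun x hx => by
  obtain ⟨M, hMA, hMipv, hxM⟩ := hA.2 {x} (by simpa using hx)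
  exact le_sSup (mem_ipvSubextensions.2 ⟨hMA.trans hAE, hMipv⟩) (hxM (by simp))

lemma isLIPV_of_le_sSup_ipvSubextensions {F E : Subfield K}
    (hconst : ∀ x : K, d x = 0 → x ∈ F) (hFE : F ≤ E)
    (hE : E ≤ sSup (ipvSubextensions d F E)) : IsLIPV d F E := by
  have hne : (ipvSubextensions d F E).Nonempty := ⟨F, hFE, isIPV_refl d F⟩
  refine ⟨hFE, fun X hX => ?_⟩
  have hXU : (X : Set K) ⊆ ⋃ M ∈ ipvSubextensions d F E, (M : Set K) := by
    rw [← Subfield.coe_sSup_of_directedOn hne (directedOn_ipvSubextensions hconst E)]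
    exact hX.trans hE
  obtain ⟨M, ⟨hME, hMipv⟩, hXM⟩ := DirectedOn.exists_mem_subset_of_finset_subset_biUnion hne
    (directedOn_ipvSubextensions hconst E) hXU
  exact ⟨M, hME, hMipv, hXM⟩

end

theorem stmt_7_general {K : Type*} [Field K] (d : K → K)
    (F : Subfield K)
    (hconst : ∀ x : K, d x = 0 → x ∈ F)
    (I : Set (Subfield K)) (hI : ∀ E ∈ I, DStable d E ∧ IsLIPV d F E) :
    IsLIPV d F (F ⊔ sSup I) := by
  refine isLIPV_of_le_sSup_ipvSubextensions hconst le_sup_left (sup_le ?_ (sSup_le ?_))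
  · exact le_sSup (mem_ipvSubextensions.2 ⟨le_sup_left, isIPV_refl d F⟩)
  · exact fun A hA => (hI A hA).2.le_sSup_ipvSubextensions (le_sSup hA |>.trans le_sup_right)

/-- a compositum of locally iterated Picard–Vessiot subextensions of `F`
inside a no-new-constants extension `K` of `F` is again LIPV over `F`. -/
theorem stmt_7 {K : Type*} [Field K] (d : K → K) (hd : IsDeriv d)
    (F : Subfield K) (hFst : DStable d F)
    (hconst : ∀ x : K, d x = 0 → x ∈ F)
    (I : Set (Subfield K)) (hI : ∀ E ∈ I, DStable d E ∧ IsLIPV d F E) :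
    IsLIPV d F (F ⊔ sSup I) :=
  stmt_7_general d F hconst I hI
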